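/- arXiv:math/0603409 — 2 statements merged into one kernel-verified Lean document; each statement's English description precedes it below -/
import Mathlib

section
/- Let W be the k-vector space with basis {e_{(a,b)}} indexed by pairs of functions a, b : {1,…,m} → {0,1,…,ℓ−1}. Define k-linear maps x_i and γ_i on W by: x_i(e_{(a,b)}) = e_{(a+ε_i, b)} if a_i ≤ ℓ−2 and x_i(e_{(a,b)}) = 0 if a_i = ℓ−1; and γ_i(e_{(a,b)}) = q^{a_i} · e_{(a, b+ε_i)}, where ε_i is the i-th standard unit vector and the addition b+ε_i is taken modulo ℓ. (These maps form a quantum elementary abelian module structure of rank m on W; W is the left regular representation of the algebra A = Λ ⋊ G.) Then for every nonzero λ = (λ_1,…,λ_m) ∈ k^m, the operator τ_λ = λ_1·(x_1∘h_1) + ⋯ + λ_m·(x_m∘h_m) satisfies dim_k ker(τ_λ) = ℓ^{2m−1}; equivalently, W is a free module of rank ℓ^{2m−1} over k[t]/(t^ℓ) with t acting as τ_λ. (This is the freeness assertion of Lemma 2.2: A is free as a module over the subalgebra k⟨τ_λ(t)⟩.) -/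
/-! `τ_λ` is the sum of the operators `λ_i F_i`, `F_i = x_i h_i`, which satisfy `F_j F_i = q F_i F_j`
for `i < j` and `F_i^ℓ = 0`. The Gaussian binomials `[ℓ choose j]_q` vanish for `0 < j < ℓ`, so the
`q`-binomial theorem gives `τ_λ^ℓ = 0`. For `i` with `λ_i ≠ 0`, `τ_λ^(ℓ-1)` is injective on the
`ℓ^(2m-1)`-dimensional space of functions supported in `a_i = 0`. Finally, an operator `f` with
`f^ℓ = 0` on a space of dimension `ℓ r` and `rank f^(ℓ-1) ≥ r` has all its Jordan blocks of size
`ℓ`, so `dim ker f = r`. -/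

/-- The index set for the standard basis of the regular representation `W` of
`A = Λ ⋊ G`: pairs of functions `a, b : {1,…,m} → {0,…,ℓ−1}`. -/
abbrev QEAIdx (m ℓ : ℕ) := (Fin m → Fin ℓ) × (Fin m → Fin ℓ)

/-- The `k`-vector space `W` with basis `e_{(a,b)}` indexed by `QEAIdx m ℓ`,
realized as the space of `k`-valued functions on the (finite) index set. -/
abbrev QEASpace (k : Type*) [Field k] (m ℓ : ℕ) := QEAIdx m ℓ → k

/-- The operator `x_i` on `W`: `x_i (e_{(a,b)}) = e_{(a+ε_i,b)}` if `a_i ≤ ℓ−2`, and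
`x_i (e_{(a,b)}) = 0` if `a_i = ℓ−1`.  (In coordinates, `(x_i f)(a,b) = f(a−ε_i,b)` when
`a_i ≥ 1` and `0` otherwise.) -/
def qeaX (k : Type*) [Field k] (m ℓ : ℕ) [NeZero ℓ] (i : Fin m) :
    Module.End k (QEASpace k m ℓ) where
  toFun f := fun p =>
    if 1 ≤ (p.1 i).val then f (Function.update p.1 i (p.1 i - 1), p.2) else 0
  map_add' f g := by
    funext p; by_cases h : 1 ≤ (p.1 i).val <;> simp [h]
  map_smul' c f := by
    funext p; by_cases h : 1 ≤ (p.1 i).val <;> simp [h]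

/-- The operator `γ_i` on `W`: `γ_i (e_{(a,b)}) = q^{a_i} · e_{(a, b+ε_i)}`, where the
addition `b + ε_i` is taken modulo `ℓ`.  (In coordinates,
`(γ_i f)(a,b) = q^{a_i} · f(a, b−ε_i)` with subtraction mod `ℓ`.) -/
def qeaG (k : Type*) [Field k] (q : k) (m ℓ : ℕ) [NeZero ℓ] (i : Fin m) :
    Module.End k (QEASpace k m ℓ) where
  toFun f := fun p => q ^ (p.1 i).val * f (p.1, Function.update p.2 i (p.2 i - 1))
  map_add' f g := by funext p; simp [mul_add]
  map_smul' c f := by funext p; simp; ring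

/-- The operator `h_j = γ_1 ∘ ⋯ ∘ γ_{j−1}` (so `h_1 = id`). -/
noncomputable def qeaH (k : Type*) [Field k] (q : k) (m ℓ : ℕ) [NeZero ℓ] (j : Fin m) :
    Module.End k (QEASpace k m ℓ) :=
  (List.ofFn fun i : Fin m => if i < j then qeaG k q m ℓ i else 1).prod

section QChoose
variable {k : Type*} [CommRing k] (q : k)

def qChoose : ℕ → ℕ → k
  | _, 0 => 1
  | 0, _ + 1 => 0
  | n + 1, j + 1 => qChoose n j + q ^ (j + 1) * qChoose n (j + 1)

@[simp] lemma qChoose_zero_right (n : ℕ) : qChoose q n 0 = 1 := by cases n <;> rfl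

lemma qChoose_succ_succ (n j : ℕ) :
    qChoose q (n + 1) (j + 1) = qChoose q n j + q ^ (j + 1) * qChoose q n (j + 1) := rfl

lemma qChoose_eq_zero_of_lt {n j : ℕ} (h : n < j) : qChoose q n j = 0 := by
  induction n generalizing j with
  | zero => obtain ⟨j, rfl⟩ := Nat.exists_eq_add_one_of_ne_zero (by omega : j ≠ 0); rfl
  | succ n ih =>
    obtain ⟨j, rfl⟩ := Nat.exists_eq_add_one_of_ne_zero (by omega : j ≠ 0)
    rw [qChoose_succ_succ, ih (by omega), ih (by omega), mul_zero, add_zero]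

@[simp] lemma qChoose_self (n : ℕ) : qChoose q n n = 1 := by
  induction n with
  | zero => rfl
  | succ n ih =>
    rw [qChoose_succ_succ, ih, qChoose_eq_zero_of_lt q n.lt_succ_self, mul_zero, add_zero]

lemma qChoose_succ_succ' (n j : ℕ) :
    qChoose q (j + n + 1) (j + 1) = q ^ n * qChoose q (j + n) j + qChoose q (j + n) (j + 1) := by
  induction j generalizing n with
  | zero =>
    induction n with
    | zero => simp [qChoose_eq_zero_of_lt]
    | succ n ih =>
      have h₁ := qChoose_succ_succ q (n + 1) 0
      have h₂ := qChoose_succ_succ q n 0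
      simp only [zero_add, qChoose_zero_right, pow_one, mul_one] at *
      linear_combination h₁ + q * ih - h₂
  | succ j ih =>
    induction n with
    | zero => simp [qChoose_eq_zero_of_lt]
    | succ n ihn =>
      have h₁ := qChoose_succ_succ q (j + n + 2) (j + 1)
      have h₂ := qChoose_succ_succ q (j + n + 1) j
      have h₃ := qChoose_succ_succ q (j + n + 1) (j + 1)
      have hj := ih (n + 1)
      rw [show j + (n + 1) = j + n + 1 by ring] at hj
      rw [show j + 1 + (n + 1) = j + n + 2 by ring, show j + 1 + n = j + n + 1 by ring] at *
      linear_combination h₁ + hj + q ^ (j + 2) * ihn - q ^ (n + 1) * h₂ - h₃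

lemma qChoose_eq_zero_of_isPrimitiveRoot [IsDomain k] {ℓ : ℕ} (hq : IsPrimitiveRoot q ℓ) {j : ℕ}
    (hj₀ : 0 < j) (hjℓ : j < ℓ) : qChoose q ℓ j = 0 := by
  obtain ⟨t, rfl⟩ := Nat.exists_eq_add_one_of_ne_zero hj₀.ne'
  obtain ⟨n, rfl⟩ : ∃ n, ℓ = t + n + 1 := ⟨ℓ - t - 1, by omega⟩
  have key : (q ^ (t + 1) - 1) * qChoose q (t + n + 1) (t + 1) =
      (q ^ (t + n + 1) - 1) * qChoose q (t + n) t := by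
    linear_combination q ^ (t + 1) * qChoose_succ_succ' q n t
      - qChoose_succ_succ q (t + n) t
  rw [hq.pow_eq_one, sub_self, zero_mul] at key
  exact (mul_eq_zero.1 key).resolve_left (sub_ne_zero.2 (hq.pow_ne_one_of_pos_of_lt
    t.succ_ne_zero hjℓ))

variable {R : Type*} [Ring R] [Algebra k R] {q}

lemma mul_pow_eq_smul_of_mul_eq_smul {a b : R} (h : b * a = q • (a * b)) (n : ℕ) :
    b * a ^ n = q ^ n • (a ^ n * b) := by
  induction n with
  | zero => simp
  | succ n ih =>
    rw [pow_succ, ← mul_assoc, ih, smul_mul_assoc, mul_assoc, h, mul_smul_comm, smul_smul,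
      ← mul_assoc, pow_succ]

open Finset in
theorem add_pow_of_mul_eq_smul {a b : R} (h : b * a = q • (a * b)) (n : ℕ) :
    (a + b) ^ n = ∑ p ∈ antidiagonal n, qChoose q n p.1 • (a ^ p.1 * b ^ p.2) := by
  induction n with
  | zero => simp
  | succ n ih =>
    set g : ℕ × ℕ → R := fun p => (q ^ p.1 * qChoose q n p.1) • (a ^ p.1 * b ^ p.2)
    have hshift : ∑ p ∈ antidiagonal n, g (p.1, p.2 + 1) =
        b ^ (n + 1) + ∑ p ∈ antidiagonal n, g (p.1 + 1, p.2) := by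
      have h₁ := Nat.sum_antidiagonal_succ (f := g) (n := n)
      rw [Nat.sum_antidiagonal_succ'] at h₁
      simpa [g, qChoose_eq_zero_of_lt] using h₁
    have hterm : ∀ p : ℕ × ℕ, (a + b) * (qChoose q n p.1 • (a ^ p.1 * b ^ p.2)) =
        qChoose q n p.1 • (a ^ (p.1 + 1) * b ^ p.2) + g (p.1, p.2 + 1) := fun p => by
      rw [mul_smul_comm, add_mul, ← mul_assoc, ← mul_assoc, mul_pow_eq_smul_of_mul_eq_smul h,
        smul_mul_assoc, smul_add, smul_smul, ← pow_succ', mul_assoc, ← pow_succ', mul_comm]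
    rw [pow_succ', ih, Finset.mul_sum, Finset.sum_congr rfl fun p _ => hterm p,
      Finset.sum_add_distrib, hshift, Nat.sum_antidiagonal_succ]
    simp only [qChoose_succ_succ, add_smul, Finset.sum_add_distrib, qChoose_zero_right, one_smul,
      pow_zero, one_mul, g]
    abel

theorem add_pow_eq_zero_of_mul_eq_smul [IsDomain k] {ℓ : ℕ} (hq : IsPrimitiveRoot q ℓ) {a b : R}
    (h : b * a = q • (a * b)) (ha : a ^ ℓ = 0) (hb : b ^ ℓ = 0) : (a + b) ^ ℓ = 0 := by
  rw [add_pow_of_mul_eq_smul h]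
  refine Finset.sum_eq_zero fun p hp => ?_
  rw [Finset.HasAntidiagonal.mem_antidiagonal] at hp
  rcases Nat.eq_zero_or_pos p.1 with h₁ | h₁
  · rw [h₁, zero_add] at hp
    rw [hp, hb, mul_zero, smul_zero]
  rcases Nat.eq_zero_or_pos p.2 with h₂ | h₂
  · rw [h₂, add_zero] at hp
    rw [hp, ha, zero_mul, smul_zero]
  rw [qChoose_eq_zero_of_isPrimitiveRoot q hq h₁ (by omega), zero_smul]

theorem Finset.sum_pow_eq_zero_of_mul_eq_smul [IsDomain k] {ℓ : ℕ} [NeZero ℓ]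
    (hq : IsPrimitiveRoot q ℓ)    {ι : Type*} [LinearOrder ι] (F : ι → R) (hF : ∀ i j, i < j → F j * F i = q • (F i * F j))
    (hnil : ∀ i, F i ^ ℓ = 0) (s : Finset ι) : (∑ i ∈ s, F i) ^ ℓ = 0 := by
  induction s using Finset.induction_on_max with
  | empty => rw [Finset.sum_empty, zero_pow (NeZero.ne ℓ)]
  | insert a s ha ih =>
    rw [Finset.sum_insert fun h => (ha a h).false, add_comm]
    refine add_pow_eq_zero_of_mul_eq_smul hq ?_ ih (hnil a)
    rw [Finset.mul_sum, Finset.sum_mul, Finset.smul_sum]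
    exact Finset.sum_congr rfl fun i hi => hF i a (ha i hi)

end QChoose

section NilpotentKernel
open Module LinearMap

lemma range_pow_le_ker_of_pow_succ_eq_zero {R M : Type*} [Semiring R] [AddCommMonoid M]
    [Module R M] {f : Module.End R M} {n : ℕ} (hf : f ^ (n + 1) = 0) : range (f ^ n) ≤ ker f := by
  rw [range_le_ker_iff, ← Module.End.mul_eq_comp, ← pow_succ', hf]

variable {K V : Type*} [DivisionRing K] [AddCommGroup V] [Module K V] [FiniteDimensional K V]
  {f : Module.End K V} {n : ℕ}

lemma finrank_range_pow_succ_add_le (hf : f ^ (n + 1) = 0) {s : ℕ} (hs : s ≤ n) :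
    finrank K (range (f ^ (s + 1))) + finrank K (range (f ^ n)) ≤ finrank K (range (f ^ s)) := by
  set R := range (f ^ s)
  have hle : range (f ^ n) ≤ R := by
    rw [← Nat.add_sub_cancel' hs, pow_add, Module.End.mul_eq_comp]
    exact range_comp_le_range _ _
  have hker : (range (f ^ n)).comap R.subtype ≤ ker (f.domRestrict R) := by
    rw [ker_domRestrict]
    exact Submodule.comap_mono (range_pow_le_ker_of_pow_succ_eq_zero hf)
  calc finrank K (range (f ^ (s + 1))) + finrank K (range (f ^ n))
      = finrank K (range (f.domRestrict R)) + finrank K ((range (f ^ n)).comap R.subtype) := by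
        rw [range_domRestrict, ← range_comp, ← Module.End.mul_eq_comp, ← pow_succ',
          (Submodule.comapSubtypeEquivOfLe hle).finrank_eq]
    _ ≤ finrank K (range (f.domRestrict R)) + finrank K (ker (f.domRestrict R)) := by
        gcongr; exact Submodule.finrank_mono hker
    _ = finrank K R := finrank_range_add_finrank_ker _

lemma mul_finrank_range_pow_le (hf : f ^ (n + 1) = 0) {j : ℕ} (hj : j ≤ n + 1) :
    j * finrank K (range (f ^ n)) ≤ finrank K (range (f ^ (n + 1 - j))) := by
  induction j with
  | zero => simp
  | succ j ih =>
    have h := finrank_range_pow_succ_add_le hf (s := n - j) (by omega)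
    rw [show n - j + 1 = n + 1 - j by omega] at h
    rw [show n + 1 - (j + 1) = n - j by omega, add_one_mul]
    linarith [ih (by omega)]

theorem finrank_ker_eq_of_pow_succ_eq_zero (hf : f ^ (n + 1) = 0) {r : ℕ}
    (hr : r ≤ finrank K (range (f ^ n))) (hV : finrank K V = (n + 1) * r) :
    finrank K (ker f) = r := by
  have hker : r ≤ finrank K (ker f) :=
    hr.trans (Submodule.finrank_mono (range_pow_le_ker_of_pow_succ_eq_zero hf))
  have hrange : n * r ≤ finrank K (range f) := by
    have h := mul_finrank_range_pow_le hf (j := n) (by omega)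
    rw [show n + 1 - n = 1 by omega, pow_one] at h
    exact (Nat.mul_le_mul_left n hr).trans h
  have := finrank_range_add_finrank_ker f
  rw [hV, add_one_mul] at this
  omega

end NilpotentKernel

lemma List.prod_ofFn_mul_eq_smul {k R : Type*} [CommSemiring k] [Semiring R] [Algebra k R] {n : ℕ}
    (g : Fin n → R) (c : Fin n → k) {x : R} (h : ∀ t, g t * x = c t • (x * g t)) :
    (List.ofFn g).prod * x = (∏ t, c t) • (x * (List.ofFn g).prod) := by
  induction n with
  | zero => simp
  | succ n ih =>
    rw [List.ofFn_succ, List.prod_cons, Fin.prod_univ_succ, mul_assoc, ih _ _ fun t => h t.succ,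
      mul_smul_comm, ← mul_assoc, h, smul_mul_assoc, smul_smul, mul_assoc, mul_comm (c 0)]

lemma Fin.val_sub_one_of_one_le {ℓ : ℕ} [NeZero ℓ] {x : Fin ℓ} (h : 1 ≤ x.val) :
    (x - 1).val = x.val - 1 :=
  Fin.val_sub_one_of_ne_zero (Fin.val_ne_zero_iff.1 (by omega))

section Operators
variable {k : Type*} [Field k] {ℓ : ℕ} [NeZero ℓ] {m : ℕ} (q : k)

lemma qeaX_apply (i : Fin m) (f : QEASpace k m ℓ) (p : QEAIdx m ℓ) :
    qeaX k m ℓ i f p =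
      if 1 ≤ (p.1 i).val then f (Function.update p.1 i (p.1 i - 1), p.2) else 0 := rfl

lemma qeaG_apply (i : Fin m) (f : QEASpace k m ℓ) (p : QEAIdx m ℓ) :
    qeaG k q m ℓ i f p = q ^ (p.1 i).val * f (p.1, Function.update p.2 i (p.2 i - 1)) := rfl

lemma qeaG_mul_qeaX_of_ne {i j : Fin m} (h : j ≠ i) :
    qeaG k q m ℓ j * qeaX k m ℓ i = qeaX k m ℓ i * qeaG k q m ℓ j := by
  refine LinearMap.ext fun f => funext fun p => ?_
  simp only [Module.End.mul_apply, qeaX_apply, qeaG_apply]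
  split_ifs <;> simp [Function.update_of_ne h]

lemma qeaG_mul_qeaX_self (i : Fin m) :
    qeaG k q m ℓ i * qeaX k m ℓ i = q • (qeaX k m ℓ i * qeaG k q m ℓ i) := by
  refine LinearMap.ext fun f => funext fun p => ?_
  simp only [LinearMap.smul_apply, Pi.smul_apply, smul_eq_mul, Module.End.mul_apply,
    qeaX_apply, qeaG_apply]
  split_ifs with hi
  · rw [Function.update_self, Fin.val_sub_one_of_one_le hi, ← mul_assoc, ← pow_succ',
      Nat.sub_add_cancel hi]
  · simp

lemma qeaG_commute (i j : Fin m) : Commute (qeaG k q m ℓ i) (qeaG k q m ℓ j) := by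
  rcases eq_or_ne i j with rfl | h
  · rfl
  · refine LinearMap.ext fun f => funext fun p => ?_
    simp only [Module.End.mul_apply, qeaG_apply, Function.update_of_ne h,
      Function.update_of_ne h.symm, Function.update_comm h]
    ring

lemma qeaX_commute (i j : Fin m) : Commute (qeaX k m ℓ i) (qeaX k m ℓ j) := by
  rcases eq_or_ne i j with rfl | h
  · rfl
  · refine LinearMap.ext fun f => funext fun p => ?_
    simp only [Module.End.mul_apply, qeaX_apply]
    split_ifs <;> simp_all [Function.update_of_ne h.symm, Function.update_comm h]

lemma qeaH_mul_qeaX (i j : Fin m) :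
    qeaH k q m ℓ j * qeaX k m ℓ i = (if i < j then q else 1) • (qeaX k m ℓ i * qeaH k q m ℓ j) := by
  rw [qeaH, List.prod_ofFn_mul_eq_smul _ (fun t => if t = i then (if i < j then q else 1) else 1),
    Finset.prod_ite_eq', if_pos (Finset.mem_univ i)]
  intro t
  rcases eq_or_ne t i with rfl | h
  · by_cases htj : t < j <;> simp [htj, qeaG_mul_qeaX_self]
  · by_cases htj : t < j <;> simp [htj, h, qeaG_mul_qeaX_of_ne q h]

lemma qeaH_commute (i j : Fin m) : Commute (qeaH k q m ℓ i) (qeaH k q m ℓ j) := by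
  refine Commute.list_prod_left _ _ fun g hg => Commute.list_prod_right _ _ fun g' hg' => ?_
  obtain ⟨t, rfl⟩ := (List.mem_ofFn' _ _).1 hg
  obtain ⟨t', rfl⟩ := (List.mem_ofFn' _ _).1 hg'
  dsimp only
  split_ifs <;> simp [qeaG_commute]

lemma qeaXH_mul_qeaXH_of_lt {i j : Fin m} (hij : i < j) :
    qeaX k m ℓ j * qeaH k q m ℓ j * (qeaX k m ℓ i * qeaH k q m ℓ i) =
      q • (qeaX k m ℓ i * qeaH k q m ℓ i * (qeaX k m ℓ j * qeaH k q m ℓ j)) := by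
  have hji := qeaH_mul_qeaX (ℓ := ℓ) q i j
  have hij' := qeaH_mul_qeaX (ℓ := ℓ) q j i
  rw [if_pos hij] at hji
  rw [if_neg (lt_asymm hij), one_smul] at hij'
  calc qeaX k m ℓ j * qeaH k q m ℓ j * (qeaX k m ℓ i * qeaH k q m ℓ i)
      = qeaX k m ℓ j * (qeaH k q m ℓ j * qeaX k m ℓ i) * qeaH k q m ℓ i := by
        simp only [mul_assoc]
    _ = q • (qeaX k m ℓ j * qeaX k m ℓ i * (qeaH k q m ℓ j * qeaH k q m ℓ i)) := by
        rw [hji, mul_smul_comm, smul_mul_assoc]; simp only [mul_assoc]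
    _ = q • (qeaX k m ℓ i * (qeaH k q m ℓ i * qeaX k m ℓ j) * qeaH k q m ℓ j) := by
        rw [hij', (qeaX_commute (k := k) (ℓ := ℓ) j i).eq, (qeaH_commute q j i).eq]
        simp only [mul_assoc]
    _ = _ := by simp only [mul_assoc]

lemma qeaX_pow_apply (i : Fin m) (s : ℕ) (f : QEASpace k m ℓ) (p : QEAIdx m ℓ) :
    (qeaX k m ℓ i ^ s) f p = if h : s ≤ (p.1 i).val then
      f (Function.update p.1 i ⟨(p.1 i).val - s, by omega⟩, p.2) else 0 := by
  induction s generalizing p with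
  | zero => simp
  | succ s ih =>
    rw [pow_succ', Module.End.mul_apply, qeaX_apply]
    split_ifs with h₁ h₂ h₂
    · rw [ih, dif_pos (by simp [Fin.val_sub_one_of_one_le h₁]; omega)]
      simp only [Function.update_self, Function.update_idem, Fin.val_sub_one_of_one_le h₁]
      congr 4
      omega
    · rw [ih, dif_neg (by simp [Fin.val_sub_one_of_one_le h₁]; omega)]
    · omega
    · rfl

lemma qeaX_pow_eq_zero (i : Fin m) : qeaX k m ℓ i ^ ℓ = 0 := by
  refine LinearMap.ext fun f => funext fun p => ?_
  rw [qeaX_pow_apply, dif_neg (by have := (p.1 i).isLt; omega)]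
  rfl

lemma qeaX_commute_qeaH_self (i : Fin m) : Commute (qeaX k m ℓ i) (qeaH k q m ℓ i) := by
  have h := qeaH_mul_qeaX (ℓ := ℓ) q i i
  rw [if_neg (lt_irrefl i), one_smul] at h
  exact h.symm

lemma qeaXH_pow_eq_zero (i : Fin m) : (qeaX k m ℓ i * qeaH k q m ℓ i) ^ ℓ = 0 := by
  rw [(qeaX_commute_qeaH_self q i).mul_pow, qeaX_pow_eq_zero (k := k), zero_mul]

end Operators

section Filtration
variable (k : Type*) [Field k] (m ℓ : ℕ)

def qeaSupportedBelow (i : Fin m) (d : ℕ) : Submodule k (QEASpace k m ℓ) where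
  carrier := {f | ∀ p : QEAIdx m ℓ, d ≤ (p.1 i).val → f p = 0}
  add_mem' hf hg p hp := by simp [hf p hp, hg p hp]
  zero_mem' _ _ := rfl
  smul_mem' c f hf p hp := by simp [hf p hp]

variable {k m ℓ} {i : Fin m} {d : ℕ} {f : QEASpace k m ℓ}

lemma qeaSupportedBelow_mono {e : ℕ} (hde : d ≤ e) :
    qeaSupportedBelow k m ℓ i d ≤ qeaSupportedBelow k m ℓ i e :=
  fun _ hf p hp => hf p (hde.trans hp)

variable [NeZero ℓ]

variable (q : k)

lemma qeaG_mem_qeaSupportedBelow (j : Fin m) (hf : f ∈ qeaSupportedBelow k m ℓ i d) :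
    qeaG k q m ℓ j f ∈ qeaSupportedBelow k m ℓ i d := fun p hp => by
  rw [qeaG_apply, hf (p.1, Function.update p.2 j (p.2 j - 1)) hp, mul_zero]

lemma qeaH_mem_qeaSupportedBelow (j : Fin m) (hf : f ∈ qeaSupportedBelow k m ℓ i d) :
    qeaH k q m ℓ j f ∈ qeaSupportedBelow k m ℓ i d := by
  refine List.prod_induction (fun g : Module.End k _ => ∀ f ∈ qeaSupportedBelow k m ℓ i d,
    g f ∈ qeaSupportedBelow k m ℓ i d) (fun a b ha hb f hf => ha _ (hb f hf))
    (fun f hf => hf) (fun g hg => ?_) f hf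
  obtain ⟨t, rfl⟩ := (List.mem_ofFn' _ _).1 hg
  dsimp only
  split_ifs
  exacts [fun f hf => qeaG_mem_qeaSupportedBelow q t hf, fun f hf => hf]

lemma qeaX_mem_qeaSupportedBelow_of_ne {j : Fin m} (hji : j ≠ i)
    (hf : f ∈ qeaSupportedBelow k m ℓ i d) : qeaX k m ℓ j f ∈ qeaSupportedBelow k m ℓ i d :=
  fun p hp => by
    rw [qeaX_apply]
    split_ifs
    · exact hf _ (by simpa [Function.update_of_ne hji.symm] using hp)
    · rfl

lemma qeaX_mem_qeaSupportedBelow_succ (hf : f ∈ qeaSupportedBelow k m ℓ i d) :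
    qeaX k m ℓ i f ∈ qeaSupportedBelow k m ℓ i (d + 1) := fun p hp => by
  rw [qeaX_apply, if_pos (by omega)]
  exact hf _ (by dsimp only; rw [Function.update_self, Fin.val_sub_one_of_one_le (by omega)]; omega)

lemma qeaXH_mem_qeaSupportedBelow_of_ne {j : Fin m} (hji : j ≠ i)
    (hf : f ∈ qeaSupportedBelow k m ℓ i d) :
    (qeaX k m ℓ j * qeaH k q m ℓ j) f ∈ qeaSupportedBelow k m ℓ i d :=
  qeaX_mem_qeaSupportedBelow_of_ne hji (qeaH_mem_qeaSupportedBelow q j hf)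

lemma qeaXH_mem_qeaSupportedBelow_succ (hf : f ∈ qeaSupportedBelow k m ℓ i d) :
    (qeaX k m ℓ i * qeaH k q m ℓ i) f ∈ qeaSupportedBelow k m ℓ i (d + 1) :=
  qeaX_mem_qeaSupportedBelow_succ (qeaH_mem_qeaSupportedBelow q i hf)

end Filtration

section Tau
variable {k : Type*} [Field k] {ℓ : ℕ} [NeZero ℓ] {m : ℕ} (q : k) (lam : Fin m → k)

noncomputable def qeaTau : Module.End k (QEASpace k m ℓ) :=
  ∑ i, lam i • (qeaX k m ℓ i * qeaH k q m ℓ i)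

theorem qeaTau_pow_eq_zero (hq : IsPrimitiveRoot q ℓ) : qeaTau (ℓ := ℓ) q lam ^ ℓ = 0 := by
  refine Finset.sum_pow_eq_zero_of_mul_eq_smul hq _ (fun i j hij => ?_) (fun i => ?_) _
  · rw [smul_mul_smul_comm, qeaXH_mul_qeaXH_of_lt q hij, smul_mul_smul_comm, smul_comm, mul_comm]
  · rw [smul_pow, qeaXH_pow_eq_zero, smul_zero]

variable {q lam} {i : Fin m} {d : ℕ} {f : QEASpace k m ℓ}

lemma qeaTau_mem_qeaSupportedBelow_succ (hf : f ∈ qeaSupportedBelow k m ℓ i d) :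
    qeaTau q lam f ∈ qeaSupportedBelow k m ℓ i (d + 1) := by
  rw [qeaTau, LinearMap.sum_apply]
  refine Submodule.sum_mem _ fun j _ => Submodule.smul_mem _ _ ?_
  rcases eq_or_ne j i with rfl | hji
  · exact qeaXH_mem_qeaSupportedBelow_succ q hf
  · exact qeaSupportedBelow_mono d.le_succ (qeaXH_mem_qeaSupportedBelow_of_ne q hji hf)

/-- Only the summand `λ_i x_i h_i` of `τ` raises `a_i`; the others preserve it. -/
lemma qeaTau_pow_sub_mem_qeaSupportedBelow (hf : f ∈ qeaSupportedBelow k m ℓ i 1) (s : ℕ) :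
    (qeaTau (ℓ := ℓ) q lam ^ s - (lam i • (qeaX k m ℓ i * qeaH k q m ℓ i)) ^ s) f ∈
      qeaSupportedBelow k m ℓ i s := by
  set τ := qeaTau (ℓ := ℓ) q lam with hτ
  set L := lam i • (qeaX k m ℓ i * qeaH k q m ℓ i)
  have hL : ∀ s, (L ^ s) f ∈ qeaSupportedBelow k m ℓ i (s + 1) := fun s => by
    induction s with
    | zero => simpa using hf
    | succ s ih =>
      rw [pow_succ', Module.End.mul_apply]
      exact Submodule.smul_mem _ _ (qeaXH_mem_qeaSupportedBelow_succ q ih)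
  induction s with
  | zero => simp
  | succ s ih =>
    have hrest : (τ - L) ((L ^ s) f) ∈ qeaSupportedBelow k m ℓ i (s + 1) := by
      rw [hτ, qeaTau, ← Finset.add_sum_erase _ _ (Finset.mem_univ i), add_sub_cancel_left,
        LinearMap.sum_apply]
      exact Submodule.sum_mem _ fun j hj => Submodule.smul_mem _ _
        (qeaXH_mem_qeaSupportedBelow_of_ne q (Finset.ne_of_mem_erase hj) (hL s))
    have hsplit : (τ ^ (s + 1) - L ^ (s + 1)) f =
        τ ((τ ^ s - L ^ s) f) + (τ - L) ((L ^ s) f) := by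
      simp only [pow_succ', Module.End.mul_apply, LinearMap.sub_apply, map_sub]
      abel
    rw [hsplit]
    exact add_mem (qeaTau_mem_qeaSupportedBelow_succ ih) hrest

end Tau

section Injectivity
variable {k : Type*} [Field k] {ℓ : ℕ} [NeZero ℓ] {m : ℕ} {q : k}

lemma qeaG_injective (hq : q ≠ 0) (i : Fin m) : Function.Injective (qeaG k q m ℓ i) := by
  refine (injective_iff_map_eq_zero _).2 fun f hf => funext fun p => ?_
  have h := congrFun hf (p.1, Function.update p.2 i (p.2 i + 1))
  simp only [qeaG_apply, Function.update_self, Function.update_idem, add_sub_cancel_right,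
    Function.update_eq_self] at h
  exact (mul_eq_zero.1 h).resolve_left (pow_ne_zero _ hq)

lemma qeaH_injective (hq : q ≠ 0) (j : Fin m) : Function.Injective (qeaH k q m ℓ j) := by
  refine List.prod_induction (fun g : Module.End k _ => Function.Injective g)
    (fun a b ha hb => ha.comp hb) Function.injective_id (fun g hg => ?_)
  obtain ⟨t, rfl⟩ := (List.mem_ofFn' _ _).1 hg
  dsimp only
  split_ifs
  exacts [qeaG_injective hq t, Function.injective_id]

/-- The top component `a_i = ℓ - 1` of `τ^(ℓ-1) f` is `λ_i^(ℓ-1) x_i^(ℓ-1) h_i^(ℓ-1) f`, and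
`x_i^(ℓ-1)` carries the slice `a_i = 0` bijectively onto the slice `a_i = ℓ - 1`. -/
theorem eq_zero_of_qeaTau_pow_apply_eq_zero (hq : q ≠ 0) {lam : Fin m → k} {i : Fin m}
    (hlam : lam i ≠ 0) {f : QEASpace k m ℓ} (hf : f ∈ qeaSupportedBelow k m ℓ i 1)
    (h : (qeaTau q lam ^ (ℓ - 1)) f = 0) : f = 0 := by
  set g := (qeaH k q m ℓ i ^ (ℓ - 1)) f
  have hg : ∀ n, (qeaH k q m ℓ i ^ n) f ∈ qeaSupportedBelow k m ℓ i 1 := fun n => by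
    induction n with
    | zero => exact hf
    | succ n ih =>
      rw [pow_succ', Module.End.mul_apply]
      exact qeaH_mem_qeaSupportedBelow q i ih
  have htop : ∀ p : QEAIdx m ℓ, (p.1 i).val = ℓ - 1 →
      lam i ^ (ℓ - 1) * g (Function.update p.1 i 0, p.2) = 0 := fun p hp => by
    have h₁ := qeaTau_pow_sub_mem_qeaSupportedBelow (q := q) (lam := lam) hf (ℓ - 1) p hp.ge
    rw [LinearMap.sub_apply, h, zero_sub, smul_pow, (qeaX_commute_qeaH_self q i).mul_pow,
      LinearMap.smul_apply, Module.End.mul_apply, Pi.neg_apply, Pi.smul_apply, neg_eq_zero,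
      qeaX_pow_apply, dif_pos hp.ge] at h₁
    simpa [hp] using h₁
  have hg₀ : g = 0 := funext fun p => by
    by_cases hp : p.1 i = 0
    · have h₁ := htop (Function.update p.1 i ⟨ℓ - 1, by have := NeZero.pos ℓ; omega⟩, p.2)
        (by simp)
      rw [Function.update_idem, ← hp, Function.update_eq_self] at h₁
      exact (mul_eq_zero.1 h₁).resolve_left (pow_ne_zero _ hlam)
    · exact hg (ℓ - 1) p (Nat.one_le_iff_ne_zero.2 (Fin.val_ne_zero_iff.2 hp))
  have hinj := (qeaH_injective (ℓ := ℓ) hq i).iterate (ℓ - 1)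
  rw [← Module.End.coe_pow] at hinj
  exact hinj (hg₀.trans (map_zero _).symm)

open Module LinearMap in
theorem card_le_finrank_range_qeaTau_pow (hq : q ≠ 0) {lam : Fin m → k} {i : Fin m}
    (hlam : lam i ≠ 0) :
    Fintype.card {p : QEAIdx m ℓ // p.1 i = 0} ≤
      finrank k (range (qeaTau (ℓ := ℓ) q lam ^ (ℓ - 1))) := by
  set E := Function.ExtendByZero.linearMap k (Subtype.val : {p : QEAIdx m ℓ // p.1 i = 0} → _)
  have hE : ∀ g, E g ∈ qeaSupportedBelow k m ℓ i 1 := fun g p hp => by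
    refine Function.extend_apply' _ _ _ fun ⟨x, hx⟩ => ?_
    rw [← hx, x.2] at hp
    exact absurd hp (by simp)
  have hinj : Function.Injective ((qeaTau q lam ^ (ℓ - 1)) ∘ₗ E) :=
    (injective_iff_map_eq_zero _).2 fun g hg =>
      Function.extend_injective Subtype.val_injective (0 : QEAIdx m ℓ → k)
        ((eq_zero_of_qeaTau_pow_apply_eq_zero hq hlam (hE g) hg).trans (map_zero E).symm)
  calc Fintype.card {p : QEAIdx m ℓ // p.1 i = 0}
      = finrank k (range ((qeaTau q lam ^ (ℓ - 1)) ∘ₗ E)) := by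
        rw [finrank_range_of_inj hinj, finrank_fintype_fun_eq_card]
    _ ≤ finrank k (range (qeaTau q lam ^ (ℓ - 1))) :=
        Submodule.finrank_mono (range_comp_le_range _ _)

end Injectivity

lemma card_qeaIdx_slice {m ℓ : ℕ} [NeZero ℓ] (i : Fin m) :
    Fintype.card {p : QEAIdx m ℓ // p.1 i = 0} = ℓ ^ (2 * m - 1) := by
  have e : {a : Fin m → Fin ℓ // a i = 0} ≃ {x : Fin ℓ × ({j // j ≠ i} → Fin ℓ) // x.1 = 0} :=
    (Equiv.funSplitAt i (Fin ℓ)).subtypeEquiv fun _ => Iff.rfl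
  rw [Fintype.card_congr (Equiv.prodSubtypeFstEquivSubtypeProd
      (p := fun a : Fin m → Fin ℓ => a i = 0)), Fintype.card_prod,
    Fintype.card_congr (e.trans (Equiv.prodSubtypeFstEquivSubtypeProd (p := fun c => c = 0)))]
  simp only [Fintype.card_prod, Fintype.card_unique, Fintype.card_fun, Fintype.card_fin,
    Fintype.card_subtype_compl, one_mul, ← pow_add]
  rw [show m - 1 + m = 2 * m - 1 by have := i.pos; omega]

theorem statement3_general {k : Type*} [Field k] {ℓ : ℕ} [NeZero ℓ] {q : k}
    (hq : q ^ ℓ = 1) (hq' : ∀ s : ℕ, 0 < s → s < ℓ → q ^ s ≠ 1)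
    {m : ℕ} (lam : Fin m → k) (hlam : lam ≠ 0) :
    Module.finrank k
        (LinearMap.ker (∑ i, lam i • (qeaX k m ℓ i * qeaH k q m ℓ i))) = ℓ ^ (2 * m - 1) := by
  obtain ⟨i, hi⟩ := Function.ne_iff.1 hlam
  have hprim : IsPrimitiveRoot q ℓ := .mk_of_lt q (NeZero.pos ℓ) hq hq'
  have hℓ₁ : ℓ - 1 + 1 = ℓ := Nat.sub_add_cancel NeZero.one_le
  refine finrank_ker_eq_of_pow_succ_eq_zero (f := qeaTau q lam) (n := ℓ - 1) ?_ ?_ ?_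
  · rw [hℓ₁]
    exact qeaTau_pow_eq_zero q lam hprim
  · rw [← card_qeaIdx_slice i]
    exact card_le_finrank_range_qeaTau_pow (hprim.ne_zero (NeZero.ne ℓ)) hi
  · simp only [hℓ₁, Module.finrank_fintype_fun_eq_card, Fintype.card_prod, Fintype.card_fun,
      Fintype.card_fin, ← pow_add, ← pow_succ']
    congr 1
    have := i.pos
    omega

/-- **Lemma 2.2 (freeness over a cyclic shifted subalgebra).**  For every nonzero
`λ = (λ_1,…,λ_m) ∈ k^m`, the operator `τ_λ = λ_1 (x_1 ∘ h_1) + ⋯ + λ_m (x_m ∘ h_m)` on the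
regular representation `W` of `A = Λ ⋊ G` satisfies `dim_k ker τ_λ = ℓ^{2m−1}`;
equivalently, `W` is free of rank `ℓ^{2m−1}` over `k[t]/(t^ℓ)` with `t` acting as `τ_λ`. -/
theorem statement3 {k : Type*} [Field k] {ℓ : ℕ} (hℓ : 2 ≤ ℓ) [NeZero ℓ] {q : k}
    (hq : q ^ ℓ = 1) (hq' : ∀ s : ℕ, 0 < s → s < ℓ → q ^ s ≠ 1)
    {m : ℕ} (hm : 0 < m) (lam : Fin m → k) (hlam : lam ≠ 0) :
    Module.finrank k
        (LinearMap.ker (∑ i, lam i • (qeaX k m ℓ i * qeaH k q m ℓ i))) = ℓ ^ (2 * m - 1) :=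
  statement3_general hq hq' lam hlam
end

section
/- Let A be a Hopf algebra over a field k and set A^e = A ⊗ Aᵐᵒᵖ. Embed A into A^e via the algebra homomorphism δ(a) = Σ a_{(1)} ⊗ (S(a_{(2)}))ᵒᵖ, give A^e the right A-module structure w · a := w · δ(a) (product in A^e), and give k the left A-module structure through the counit ε. Then the k-linear map f : A^e ⊗_A k → A determined by f((x ⊗ yᵒᵖ) ⊗ c) = c · x · y is a bijection; moreover it intertwines the left multiplication action of A^e on A^e ⊗_A k with the two-sided action of A^e on A, i.e. f(((x′ ⊗ y′ᵒᵖ)·w) ⊗ c) = x′ · f(w ⊗ c) · y′ for all x′, y′ ∈ A, w ∈ A^e, c ∈ k. (This is Lemma 7.1 of the appendix: A ≅ A^e ⊗_A k as A^e-modules.) -/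
open scoped TensorProduct

/-- The `k`-linear map `δ : A → A^e = A ⊗ Aᵐᵒᵖ`, `δ(a) = Σ a_{(1)} ⊗ (S(a_{(2)}))ᵒᵖ`
(Sweedler notation), given by the comultiplication followed by `id ⊗ (op ∘ S)`. -/
noncomputable def hopfDelta (k : Type*) (A : Type*) [CommRing k] [Ring A]
    [HopfAlgebra k A] : A →ₗ[k] A ⊗[k] Aᵐᵒᵖ :=
  (TensorProduct.map LinearMap.id
      ((MulOpposite.opLinearEquiv k).toLinearMap ∘ₗ HopfAlgebra.antipode (R := k))) ∘ₗ
    Coalgebra.comul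

/-- The `k`-linear multiplication map `μ : A^e = A ⊗ Aᵐᵒᵖ → A`, `μ(x ⊗ yᵒᵖ) = x·y`. -/
noncomputable def hopfMu (k : Type*) (A : Type*) [CommRing k] [Ring A]
    [HopfAlgebra k A] : A ⊗[k] Aᵐᵒᵖ →ₗ[k] A :=
  LinearMap.mul' k A ∘ₗ
    TensorProduct.map LinearMap.id (MulOpposite.opLinearEquiv k).symm.toLinearMap

/-- The `k`-subspace `N` of `A^e` spanned by the elements `w·δ(a) − ε(a)·w`
(`w ∈ A^e`, `a ∈ A`).  Since the right `A`-module structure on `A^e` is `w · a := w·δ(a)` and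
`k` is the left `A`-module given by `ε`, the tensor product `A^e ⊗_A k` is exactly the
quotient `A^e / N`. -/
noncomputable def hopfRelSub (k : Type*) (A : Type*) [CommRing k] [Ring A]
    [HopfAlgebra k A] : Submodule k (A ⊗[k] Aᵐᵒᵖ) :=
  Submodule.span k {z : A ⊗[k] Aᵐᵒᵖ |
    ∃ (w : A ⊗[k] Aᵐᵒᵖ) (a : A),
      z = w * hopfDelta k A a - Coalgebra.counit (R := k) a • w}


section Aux

open TensorProduct MulOpposite Coalgebra HopfAlgebra LinearMap

variable {k A : Type*} [CommRing k] [Ring A] [HopfAlgebra k A]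

lemma hopfMu_tmul (x : A) (y : Aᵐᵒᵖ) : hopfMu k A (x ⊗ₜ[k] y) = x * y.unop := by
  simp [hopfMu]

lemma hopfMu_intertwine (x' y' : A) (w : A ⊗[k] Aᵐᵒᵖ) :
    hopfMu k A ((x' ⊗ₜ[k] op y') * w) = x' * hopfMu k A w * y' := by
  induction w using TensorProduct.induction_on with
  | zero => simp
  | tmul x y =>
      simp [Algebra.TensorProduct.tmul_mul_tmul, hopfMu_tmul, mul_assoc]
  | add w₁ w₂ h₁ h₂ => simp [mul_add, map_add, h₁, h₂, add_mul, mul_add]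

lemma hopfMu_delta (a : A) :
    hopfMu k A (hopfDelta k A a) = algebraMap k A (Coalgebra.counit a) := by
  have key : ∀ t : A ⊗[k] A,
      hopfMu k A ((TensorProduct.map LinearMap.id
        ((opLinearEquiv k : A ≃ₗ[k] Aᵐᵒᵖ).toLinearMap ∘ₗ antipode (R := k))) t)
      = LinearMap.mul' k A ((antipode (R := k)).lTensor A t) := by
    intro t
    induction t using TensorProduct.induction_on with
    | zero => simp
    | tmul b c => simp [hopfMu]
    | add t₁ t₂ h₁ h₂ => simp [map_add, h₁, h₂]
  have : hopfDelta k A a = (TensorProduct.map LinearMap.id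
      ((opLinearEquiv k : A ≃ₗ[k] Aᵐᵒᵖ).toLinearMap ∘ₗ antipode (R := k))) (Coalgebra.comul a) := rfl
  rw [this, key, mul_antipode_lTensor_comul_apply]

lemma hopfMu_right_delta (w : A ⊗[k] Aᵐᵒᵖ) (a : A) :
    hopfMu k A (w * hopfDelta k A a) = Coalgebra.counit (R := k) a • hopfMu k A w := by
  induction w using TensorProduct.induction_on with
  | zero => simp
  | tmul x y =>
      have := hopfMu_intertwine (k := k) x y.unop (hopfDelta k A a)
      rw [op_unop] at this
      rw [this, hopfMu_delta, hopfMu_tmul, Algebra.algebraMap_eq_smul_one]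
      rw [mul_smul_comm, smul_mul_assoc, mul_one]
  | add w₁ w₂ h₁ h₂ => simp [add_mul, map_add, h₁, h₂, smul_add]

set_option synthInstance.maxHeartbeats 400000 in
lemma hopf_tmul_sub_mem (x y : A) :
    (x * y) ⊗ₜ[k] (op (1 : A)) - x ⊗ₜ[k] op y ∈ hopfRelSub k A := by
  classical
  set T : A ⊗[k] (A ⊗[k] A) →ₗ[k] A ⊗[k] Aᵐᵒᵖ :=
    TensorProduct.map (LinearMap.mulLeft k x)
      ((opLinearEquiv k : A ≃ₗ[k] Aᵐᵒᵖ).toLinearMap ∘ₗ LinearMap.mul' k A ∘ₗ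
        (antipode (R := k)).rTensor A) with hT
  set G2 : A ⊗[k] A →ₗ[k] A ⊗[k] Aᵐᵒᵖ :=
    ((TensorProduct.mk k A Aᵐᵒᵖ x) ∘ₗ (opLinearEquiv k : A ≃ₗ[k] Aᵐᵒᵖ).toLinearMap) ∘ₗ
      (TensorProduct.lid k A).toLinearMap ∘ₗ (Coalgebra.counit (R := k)).rTensor A with hG2
  set E : A ⊗[k] A →ₗ[k] A ⊗[k] Aᵐᵒᵖ :=
    (T ∘ₗ (TensorProduct.assoc k A A A).toLinearMap ∘ₗ
      (Coalgebra.comul (R := k)).rTensor A) - G2 with hE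
  -- E on pure tensors is a generator of N
  have hmem : ∀ t : A ⊗[k] A, E t ∈ hopfRelSub k A := by
    intro t
    induction t using TensorProduct.induction_on with
    | zero => simpa using (hopfRelSub k A).zero_mem
    | tmul b c =>
        have h1 : ∀ s : A ⊗[k] A,
            T ((TensorProduct.assoc k A A A) (s ⊗ₜ[k] c))
              = (x ⊗ₜ[k] op c) * ((TensorProduct.map LinearMap.id
                  ((opLinearEquiv k : A ≃ₗ[k] Aᵐᵒᵖ).toLinearMap ∘ₗ antipode (R := k))) s) := by
          intro s
          induction s using TensorProduct.induction_on with
          | zero => simp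
          | tmul p q =>
              simp [hT, Algebra.TensorProduct.tmul_mul_tmul, ← MulOpposite.op_mul]
          | add s₁ s₂ hs₁ hs₂ => simp [map_add, add_tmul, hs₁, hs₂, mul_add]
        have hEbc : E (b ⊗ₜ[k] c)
            = (x ⊗ₜ[k] op c) * hopfDelta k A b
              - Coalgebra.counit (R := k) b • (x ⊗ₜ[k] op c) := by
          have hdelta : hopfDelta k A b = (TensorProduct.map LinearMap.id
              ((opLinearEquiv k : A ≃ₗ[k] Aᵐᵒᵖ).toLinearMap ∘ₗ antipode (R := k)))
                (Coalgebra.comul b) := rfl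
          simp only [hE, LinearMap.sub_apply, LinearMap.comp_apply,
            LinearMap.rTensor_tmul, LinearEquiv.coe_coe, hdelta]
          rw [h1]
          congr 1
          simp [hG2, TensorProduct.smul_tmul, TensorProduct.tmul_smul]
        rw [hEbc]
        exact Submodule.subset_span ⟨x ⊗ₜ[k] op c, b, rfl⟩
    | add t₁ t₂ h₁ h₂ =>
        rw [map_add]; exact (hopfRelSub k A).add_mem h₁ h₂
  -- E at comul y computes to the desired element
  have hcomp : E (Coalgebra.comul y) = (x * y) ⊗ₜ[k] (op (1 : A)) - x ⊗ₜ[k] op y := by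
    have hG2y : G2 (Coalgebra.comul y) = x ⊗ₜ[k] op y := by
      simp only [hG2, LinearMap.comp_apply, LinearEquiv.coe_coe,
        Coalgebra.rTensor_counit_comul]
      simp
    have hTl : ∀ t : A ⊗[k] A,
        T ((Coalgebra.comul (R := k)).lTensor A t)
          = ((TensorProduct.mk k A Aᵐᵒᵖ).flip (op (1 : A)))
              ((LinearMap.mulLeft k x)
                ((TensorProduct.rid k A) ((Coalgebra.counit (R := k)).lTensor A t))) := by
      intro t
      induction t using TensorProduct.induction_on with
      | zero => simp
      | tmul b c =>
          simp only [LinearMap.lTensor_tmul, hT, TensorProduct.map_tmul,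
            LinearMap.comp_apply, LinearEquiv.coe_coe,
            mul_antipode_rTensor_comul_apply]
          simp [Algebra.algebraMap_eq_smul_one, TensorProduct.tmul_smul,
            TensorProduct.smul_tmul', mul_smul_comm]
      | add t₁ t₂ h₁ h₂ => simp [map_add, h₁, h₂]
    have hfirst : T ((TensorProduct.assoc k A A A)
        ((Coalgebra.comul (R := k)).rTensor A (Coalgebra.comul y)))
          = (x * y) ⊗ₜ[k] (op (1 : A)) := by
      rw [Coalgebra.coassoc_apply, hTl, Coalgebra.lTensor_counit_comul]
      simp
    simp only [hE, LinearMap.sub_apply, LinearMap.comp_apply, LinearEquiv.coe_coe] at *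
    rw [hfirst, hG2y]
  rw [← hcomp]; exact hmem _

lemma hopfMu_sub_mem (w : A ⊗[k] Aᵐᵒᵖ) :
    hopfMu k A w ⊗ₜ[k] (op (1 : A)) - w ∈ hopfRelSub k A := by
  induction w using TensorProduct.induction_on with
  | zero => simpa using (hopfRelSub k A).zero_mem
  | tmul x y =>
      rw [hopfMu_tmul]
      have := hopf_tmul_sub_mem (k := k) x y.unop
      rwa [op_unop] at this
  | add w₁ w₂ h₁ h₂ =>
      have := (hopfRelSub k A).add_mem h₁ h₂
      convert this using 1
      rw [map_add, TensorProduct.add_tmul]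
      abel

end Aux

/-- **Lemma 7.1.**  For a Hopf algebra `A` over a field `k`, the `k`-linear map
`f : A^e ⊗_A k → A` determined by `f((x ⊗ yᵒᵖ) ⊗ c) = c·x·y` is a bijection, and it
intertwines the left `A^e`-action on `A^e ⊗_A k` with the two-sided action of `A^e` on `A`.
Here `A^e ⊗_A k` is realized as the quotient of `A^e` by the subspace `N` spanned by the
elements `w·δ(a) − ε(a)·w`, and `f` is induced by `μ(x ⊗ yᵒᵖ) = x·y`; the statement is that
`ker μ = N` and `μ` is surjective (so the induced map `A^e/N → A` is bijective), together with
the intertwining relation `μ((x′ ⊗ y′ᵒᵖ)·w) = x′·μ(w)·y′`. -/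

theorem statement13 (k : Type*) (A : Type*) [Field k] [Ring A] [HopfAlgebra k A] :
    (∀ x y : A, hopfMu k A (x ⊗ₜ[k] MulOpposite.op y) = x * y) ∧
    LinearMap.ker (hopfMu k A) = hopfRelSub k A ∧
    Function.Surjective (hopfMu k A) ∧
    (∀ (x' y' : A) (w : A ⊗[k] Aᵐᵒᵖ),
      hopfMu k A ((x' ⊗ₜ[k] MulOpposite.op y') * w) = x' * hopfMu k A w * y') := by
  classical
  refine ⟨fun x y => hopfMu_tmul x (MulOpposite.op y), ?_, ?_, fun x' y' w => hopfMu_intertwine x' y' w⟩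
  · ext w
    simp only [LinearMap.mem_ker]
    constructor
    · intro hw
      have h := hopfMu_sub_mem (k := k) w
      rw [hw, TensorProduct.zero_tmul, zero_sub] at h
      exact (Submodule.neg_mem_iff _).mp h
    · intro hw
      refine Submodule.span_induction ?_ ?_ ?_ ?_ hw
      · rintro z ⟨w', a, rfl⟩
        rw [map_sub, hopfMu_right_delta, map_smul, sub_self]
      · simp
      · intro a b _ _ ha hb; rw [map_add, ha, hb, add_zero]
      · intro c a _ ha; rw [map_smul, ha, smul_zero]
  · intro a
    exact ⟨a ⊗ₜ[k] MulOpposite.op 1, by rw [hopfMu_tmul]; simp⟩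
end
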